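/- arXiv:1709.03700 — 3 statements merged into one kernel-verified Lean document; each statement's English description precedes it below -/
import Mathlib

section
/- Let P be a dcpo such that every proper nonempty irreducible Scott closed subset F of P is either a down-linear element of the poset Irr_σ(P) of nonempty irreducible Scott closed sets, or is the supremum in Irr_σ(P) of a directed family of down-linear elements. Then P is C_σ-unique: for any dcpo Q, if C_σ(P) ≅ C_σ(Q) as lattices, then P ≅ Q as posets. -/
/-!
Under the hypothesis every proper irreducible Scott closed set is principal: a down-linear
`F` is a chain, hence directed, hence the downset of its supremum; and a directed supremum in
`Irr_σ` of principal sets is the downset of the supremum of their generators.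

An order isomorphism `C_σ(P) ≃o C_σ(Q)` preserves the top and the sup-prime elements, which
are the irreducible closed sets, so it induces `Irr_σ(P) ≃o Irr_σ(Q)` and carries the
hypothesis over to `Q`. Since `x ↦ ↓x` embeds a poset into `Irr_σ` with the principal sets as
image, it remains to see that principal sets correspond to principal sets. For proper sets
this is the first paragraph; the whole space is the delicate case. If `P` has a top `t` and
`Q` has none, directed suprema in `Q` show that `{t}ᶜ` is Scott closed; it is then the largest
proper element of `C_σ(P)`, whereas in `C_σ(Q)` the proper sets `↓y` already cover `Q`.
-/

/-- A directed complete poset. -/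
def Dcpo (P : Type*) [PartialOrder P] : Prop :=
  ∀ D : Set P, D.Nonempty → DirectedOn (· ≤ ·) D → ∃ a, IsLUB D a

/-- A Scott closed set: a lower set closed under suprema of directed subsets. -/
def ScottClosed {P : Type*} [PartialOrder P] (A : Set P) : Prop :=
  IsLowerSet A ∧ ∀ D ⊆ A, D.Nonempty → DirectedOn (· ≤ ·) D → ∀ a, IsLUB D a → a ∈ A

/-- A nonempty irreducible Scott closed set. -/
def IrrClosed {P : Type*} [PartialOrder P] (A : Set P) : Prop :=
  A.Nonempty ∧ ScottClosed A ∧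
    ∀ F₁ F₂ : Set P, ScottClosed F₁ → ScottClosed F₂ → A ⊆ F₁ ∪ F₂ → A ⊆ F₁ ∨ A ⊆ F₂

/-- The lattice `C_σ(P)` of Scott closed subsets, ordered by inclusion. -/
abbrev Cσ (P : Type*) [PartialOrder P] := {A : Set P // ScottClosed A}

/-- The poset `Irr_σ(P)` of nonempty irreducible Scott closed subsets. -/
abbrev Irrσ (P : Type*) [PartialOrder P] := {A : Set P // IrrClosed A}

/-- An element is down-linear if its principal downset is a chain. -/
def DownLinear {P : Type*} [PartialOrder P] (a : P) : Prop :=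
  IsChain (· ≤ ·) (Set.Iic a)

/-- A dcpo `P` is `C_σ`-unique if every dcpo `Q` with `C_σ(Q) ≅ C_σ(P)` is order
isomorphic to `P`. -/
def CσUnique (P : Type*) [PartialOrder P] : Prop :=
  ∀ (Q : Type*) [PartialOrder Q], Dcpo Q → Nonempty (Cσ P ≃o Cσ Q) → Nonempty (P ≃o Q)

open Set

section ScottClosed

variable {R : Type*} [PartialOrder R]

lemma scottClosed_Iic (x : R) : ScottClosed (Iic x) :=
  ⟨isLowerSet_Iic x, fun _ hD _ _ _ ha => ha.2 hD⟩

lemma irrClosed_Iic (x : R) : IrrClosed (Iic x) :=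
  ⟨nonempty_Iic, scottClosed_Iic x, fun _ _ h₁ h₂ hsub =>
    (hsub self_mem_Iic).imp (h₁.1.Iic_subset ·) (h₂.1.Iic_subset ·)⟩

lemma scottClosed_empty : ScottClosed (∅ : Set R) :=
  ⟨isLowerSet_empty, fun _ hD ⟨_, hd⟩ _ _ _ => (hD hd).elim⟩

lemma scottClosed_univ : ScottClosed (univ : Set R) :=
  ⟨isLowerSet_univ, fun _ _ _ _ _ _ => trivial⟩

lemma ScottClosed.mem_of_cofinal {A D : Set R} (hA : ScottClosed A) (hne : D.Nonempty)
    (hdir : DirectedOn (· ≤ ·) D) (hcof : ∀ d ∈ D, ∃ e ∈ D ∩ A, d ≤ e) {a : R}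
    (ha : IsLUB D a) : a ∈ A := by
  obtain ⟨d, hd⟩ := hne
  obtain ⟨e, he, -⟩ := hcof d hd
  refine hA.2 (D ∩ A) inter_subset_right ⟨e, he⟩ ?_ a ⟨fun x hx => ha.1 hx.1, fun u hu => ?_⟩
  · intro x hx y hy
    obtain ⟨z, hz, hxz, hyz⟩ := hdir x hx.1 y hy.1
    obtain ⟨w, hw, hzw⟩ := hcof z hz
    exact ⟨w, hw, hxz.trans hzw, hyz.trans hzw⟩
  · refine ha.2 fun x hx => ?_
    obtain ⟨w, hw, hxw⟩ := hcof x hx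
    exact hxw.trans (hu hw)

lemma ScottClosed.union {A B : Set R} (hA : ScottClosed A) (hB : ScottClosed B) :
    ScottClosed (A ∪ B) := by
  refine ⟨hA.1.union hB.1, fun D hD hne hdir a ha => ?_⟩
  by_cases hcof : ∀ d ∈ D, ∃ e ∈ D ∩ A, d ≤ e
  · exact Or.inl (hA.mem_of_cofinal hne hdir hcof ha)
  push Not at hcof
  obtain ⟨d₀, hd₀, hd₀A⟩ := hcof
  -- Above `d₀` the set `D` avoids `A`, so its part in `B` is cofinal.
  refine Or.inr (hB.mem_of_cofinal hne hdir (fun d hd => ?_) ha)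
  obtain ⟨z, hz, hdz, hd₀z⟩ := hdir d hd d₀ hd₀
  exact ⟨z, ⟨hz, (hD hz).resolve_left fun hzA => hd₀A z ⟨hz, hzA⟩ hd₀z⟩, hdz⟩

end ScottClosed

section CσLattice

variable {R S : Type*} [PartialOrder R] [PartialOrder S]

instance : SemilatticeSup (Cσ R) := Subtype.semilatticeSup fun _ _ => ScottClosed.union

instance : OrderBot (Cσ R) := Subtype.orderBot scottClosed_empty

instance : OrderTop (Cσ R) := Subtype.orderTop scottClosed_univ

lemma Cσ.coe_eq_univ_iff {A : Cσ R} : (A : Set R) = univ ↔ A = ⊤ := by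
  rw [Subtype.ext_iff]; rfl

lemma irrClosed_iff_supPrime (A : Cσ R) : IrrClosed (A : Set R) ↔ SupPrime A := by
  have hmin : IsMin A ↔ (A : Set R) = ∅ := by rw [isMin_iff_eq_bot, Subtype.ext_iff]; rfl
  rw [SupPrime, hmin, ← not_nonempty_iff_eq_empty, not_not]
  exact ⟨fun ⟨hne, _, hirr⟩ => ⟨hne, fun B C => hirr B C B.2 C.2⟩,
    fun ⟨hne, hprime⟩ => ⟨hne, A.2, fun F₁ F₂ h₁ h₂ => @hprime ⟨F₁, h₁⟩ ⟨F₂, h₂⟩⟩⟩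

lemma OrderIso.supPrime_apply_iff {α β : Type*} [SemilatticeSup α] [SemilatticeSup β]
    (e : α ≃o β) {a : α} : SupPrime (e a) ↔ SupPrime a := by
  simp only [SupPrime, IsMin, e.surjective.forall, ← map_sup, e.le_iff_le]

lemma irrClosed_cσIso_apply_iff (Φ : Cσ R ≃o Cσ S) (A : Cσ R) :
    IrrClosed (Φ A : Set S) ↔ IrrClosed (A : Set R) := by
  rw [irrClosed_iff_supPrime, irrClosed_iff_supPrime, Φ.supPrime_apply_iff]

def irrσCongr (Φ : Cσ R ≃o Cσ S) : Irrσ R ≃o Irrσ S where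
  toFun F := ⟨Φ ⟨F, F.2.2.1⟩, (irrClosed_cσIso_apply_iff Φ _).2 F.2⟩
  invFun G := ⟨Φ.symm ⟨G, G.2.2.1⟩, (irrClosed_cσIso_apply_iff Φ.symm _).2 G.2⟩
  left_inv F := by simp
  right_inv G := by simp
  map_rel_iff' := Φ.le_iff_le

lemma irrσCongr_symm (Φ : Cσ R ≃o Cσ S) : (irrσCongr Φ).symm = irrσCongr Φ.symm := rfl

lemma irrσCongr_eq_univ_iff (Φ : Cσ R ≃o Cσ S) {F : Irrσ R} :
    (irrσCongr Φ F : Set S) = univ ↔ (F : Set R) = univ := by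
  change ((Φ ⟨F, F.2.2.1⟩ : Cσ S) : Set S) = univ ↔ _
  rw [Cσ.coe_eq_univ_iff, map_eq_top_iff, ← Cσ.coe_eq_univ_iff]

end CσLattice

def DownLinearGenerated (R : Type*) [PartialOrder R] : Prop :=
  ∀ F : Irrσ R, (F : Set R) ≠ univ →
    DownLinear F ∨ ∃ 𝒟 : Set (Irrσ R), 𝒟.Nonempty ∧ DirectedOn (· ≤ ·) 𝒟 ∧
      (∀ G ∈ 𝒟, DownLinear G) ∧ IsLUB 𝒟 F

section Principal

variable {R : Type*} [PartialOrder R]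

def principalIrr : R ↪o Irrσ R :=
  OrderEmbedding.ofMapLEIff (fun x => ⟨Iic x, irrClosed_Iic x⟩) fun _ _ => Iic_subset_Iic

lemma coe_principalIrr (x : R) : (principalIrr x : Set R) = Iic x := rfl

lemma principalIrr_le_iff {x : R} {F : Irrσ R} : principalIrr x ≤ F ↔ x ∈ (F : Set R) :=
  ⟨fun h => h self_mem_Iic, fun h => F.2.2.1.1.Iic_subset h⟩

lemma isLUB_principalIrr_image {D : Set R} (hne : D.Nonempty) (hdir : DirectedOn (· ≤ ·) D)
    {a : R} (ha : IsLUB D a) : IsLUB (principalIrr '' D) (principalIrr a) := by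
  refine ⟨?_, fun F hF => principalIrr_le_iff.2 ?_⟩
  · rintro _ ⟨d, hd, rfl⟩
    exact principalIrr.monotone (ha.1 hd)
  · exact F.2.2.1.2 D (fun d hd => principalIrr_le_iff.1 (hF ⟨d, hd, rfl⟩)) hne hdir a ha

lemma exists_isLUB_principalIrr (hR : Dcpo R) {𝒟 : Set (Irrσ R)} (hne : 𝒟.Nonempty)
    (hdir : DirectedOn (· ≤ ·) 𝒟) (h𝒟 : 𝒟 ⊆ range principalIrr) :
    ∃ a, IsLUB 𝒟 (principalIrr a) := by
  have himage : principalIrr '' (principalIrr ⁻¹' 𝒟) = 𝒟 := image_preimage_eq_of_subset h𝒟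
  rw [← himage] at hne hdir ⊢
  have hdir' : DirectedOn (· ≤ ·) (principalIrr ⁻¹' 𝒟) :=
    (directedOn_image.1 hdir).mono fun _ _ => principalIrr.le_iff_le.1
  obtain ⟨a, ha⟩ := hR _ hne.of_image hdir'
  exact ⟨a, isLUB_principalIrr_image hne.of_image hdir' ha⟩

lemma DownLinear.mem_range_principalIrr (hR : Dcpo R) {F : Irrσ R} (h : DownLinear F) :
    F ∈ range principalIrr := by
  have hchain : IsChain (· ≤ ·) (F : Set R) := by
    rw [← IsChain.image_embedding_iff (φ := principalIrr)]
    exact h.mono (image_subset_iff.2 fun _ => principalIrr_le_iff.2)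
  obtain ⟨m, hm⟩ := hR F F.2.1 hchain.directedOn
  have hmF : m ∈ (F : Set R) := F.2.2.1.2 F subset_rfl F.2.1 hchain.directedOn m hm
  exact ⟨m, Subtype.ext (Subset.antisymm (F.2.2.1.1.Iic_subset hmF) fun _ hx => hm.1 hx)⟩

lemma DownLinearGenerated.mem_range_principalIrr (hR : Dcpo R) (h : DownLinearGenerated R)
    {F : Irrσ R} (hF : (F : Set R) ≠ univ) : F ∈ range principalIrr := by
  rcases h F hF with hdl | ⟨𝒟, hne, hdir, hdl, hlub⟩
  · exact hdl.mem_range_principalIrr hR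
  · obtain ⟨a, ha⟩ := exists_isLUB_principalIrr hR hne hdir fun G hG =>
      (hdl G hG).mem_range_principalIrr hR
    exact ⟨a, ha.unique hlub⟩

end Principal

lemma DownLinear.orderIso_apply {α β : Type*} [PartialOrder α] [PartialOrder β] (e : α ≃o β)
    {a : α} (h : DownLinear a) : DownLinear (e a) := by
  rw [DownLinear, ← e.image_Iic]
  exact h.image e

lemma DownLinearGenerated.of_cσIso {R S : Type*} [PartialOrder R] [PartialOrder S]
    (Φ : Cσ R ≃o Cσ S) (h : DownLinearGenerated R) : DownLinearGenerated S := by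
  intro G hG
  set ι := irrσCongr Φ
  have hF : (ι.symm G : Set R) ≠ univ := by
    rwa [irrσCongr_symm, Ne, irrσCongr_eq_univ_iff]
  rcases h (ι.symm G) hF with hdl | ⟨𝒟, hne, hdir, hdl, hlub⟩
  · exact Or.inl (by simpa using hdl.orderIso_apply ι)
  · refine Or.inr ⟨ι '' 𝒟, hne.image ι, hdir.mono_comp ι.monotone, ?_, ?_⟩
    · rintro _ ⟨F, hF, rfl⟩
      exact (hdl F hF).orderIso_apply ι
    · simpa using ι.isLUB_image'.2 hlub

section Top

variable {R S : Type*} [PartialOrder R] [PartialOrder S]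

lemma scottClosed_compl_singleton_of_isTop (Φ : Cσ R ≃o Cσ S) (hS : Dcpo S)
    (hSprin : ∀ G : Irrσ S, (G : Set S) ≠ univ → G ∈ range principalIrr)
    (hnoTop : ∀ u : S, ¬IsTop u) {t : R} (ht : IsTop t) : ScottClosed ({t}ᶜ : Set R) := by
  refine ⟨fun a b hba ha hbt => ha ((ht a).antisymm (hbt ▸ hba)), ?_⟩
  rintro D hD hne hdir a ha rfl
  set ι := irrσCongr Φ
  have hproper : ∀ d ∈ D, (ι (principalIrr d) : Set S) ≠ univ := fun d hd hd' =>
    hD hd ((ht d).antisymm (eq_univ_iff_forall.1 ((irrσCongr_eq_univ_iff Φ).1 hd') a))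
  -- Move the directed family `Iic d` to `S`, take its supremum `Iic q` there and pull it back:
  -- it is the supremum `Iic a = univ` of the family, so `Iic q = univ`.
  obtain ⟨q, hq⟩ := exists_isLUB_principalIrr hS ((hne.image _).image ι)
    ((hdir.mono_comp principalIrr.monotone).mono_comp ι.monotone)
    (by rintro _ ⟨_, ⟨d, hd, rfl⟩, rfl⟩; exact hSprin _ (hproper d hd))
  have hback : ι.symm (principalIrr q) = principalIrr a :=
    (ι.isLUB_image.1 hq).unique (isLUB_principalIrr_image hne hdir ha)
  refine hnoTop q fun y => ?_
  have hq_univ : (principalIrr q : Set S) = univ := by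
    rw [← ι.apply_symm_apply (principalIrr q), irrσCongr_eq_univ_iff, hback, coe_principalIrr,
      ht.Iic_eq]
  exact eq_univ_iff_forall.1 hq_univ y

lemma exists_isTop_of_cσIso (Φ : Cσ R ≃o Cσ S) (hS : Dcpo S)
    (hSprin : ∀ G : Irrσ S, (G : Set S) ≠ univ → G ∈ range principalIrr)
    {t : R} (ht : IsTop t) : ∃ u : S, IsTop u := by
  by_contra! hnoTop
  have hC := scottClosed_compl_singleton_of_isTop Φ hS hSprin hnoTop ht
  -- `{t}ᶜ` contains every proper Scott closed set, but its image contains every `Iic y`.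
  suffices Φ ⟨{t}ᶜ, hC⟩ = ⊤ from
    eq_univ_iff_forall.1 (Cσ.coe_eq_univ_iff.2 ((map_eq_top_iff Φ).1 this)) t rfl
  refine top_unique fun y _ => ?_
  have hy : Φ.symm ⟨Iic y, scottClosed_Iic y⟩ ≤ ⟨{t}ᶜ, hC⟩ := by
    rintro x hx rfl
    have hfull : (Φ.symm ⟨Iic y, scottClosed_Iic y⟩ : Set R) = univ :=
      eq_univ_of_forall fun z => (Φ.symm _).2.1 (ht z) hx
    rw [Cσ.coe_eq_univ_iff, map_eq_top_iff, ← Cσ.coe_eq_univ_iff] at hfull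
    exact hnoTop y (eq_univ_iff_forall.1 hfull)
  have := Φ.monotone hy
  rw [Φ.apply_symm_apply] at this
  exact this self_mem_Iic

end Top

lemma irrσCongr_mem_range_principalIrr {R S : Type*} [PartialOrder R] [PartialOrder S]
    (Φ : Cσ R ≃o Cσ S) (hS : Dcpo S) (hSgen : DownLinearGenerated S) {F : Irrσ R}
    (hF : F ∈ range principalIrr) : irrσCongr Φ F ∈ range principalIrr := by
  have hSprin := fun G => hSgen.mem_range_principalIrr hS (F := G)
  by_cases huniv : (irrσCongr Φ F : Set S) = univ
  · obtain ⟨x, rfl⟩ := hF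
    have hx : IsTop x := eq_univ_iff_forall.1 ((irrσCongr_eq_univ_iff Φ).1 huniv)
    obtain ⟨u, hu⟩ := exists_isTop_of_cσIso Φ hS hSprin hx
    exact ⟨u, Subtype.ext (hu.Iic_eq.trans huniv.symm)⟩
  · exact hSprin _ huniv

/-- a dcpo in which every proper nonempty irreducible Scott closed set is
either a down-linear element of `Irr_σ(P)`, or the supremum in `Irr_σ(P)` of a directed
family of down-linear elements, is `C_σ`-unique. -/
theorem stmt7 {P : Type*} [PartialOrder P] (hP : Dcpo P)
    (hDL : ∀ F : Irrσ P, (F : Set P) ≠ Set.univ →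
      DownLinear F ∨ ∃ 𝒟 : Set (Irrσ P), 𝒟.Nonempty ∧ DirectedOn (· ≤ ·) 𝒟 ∧
        (∀ G ∈ 𝒟, DownLinear G) ∧ IsLUB 𝒟 F) :
    CσUnique P := by
  rintro Q _ hQ ⟨Φ⟩
  have hQgen : DownLinearGenerated Q := DownLinearGenerated.of_cσIso Φ hDL
  set ι := irrσCongr Φ
  have hrange : range (principalIrr.trans ι.toOrderEmbedding) = range principalIrr := by
    ext G
    refine ⟨?_, fun hG => ?_⟩
    · rintro ⟨x, rfl⟩
      exact irrσCongr_mem_range_principalIrr Φ hQ hQgen ⟨x, rfl⟩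
    · obtain ⟨x, hx⟩ := irrσCongr_mem_range_principalIrr Φ.symm hP hDL hG
      refine ⟨x, ?_⟩
      change ι (principalIrr x) = G
      rw [hx, ← irrσCongr_symm, OrderIso.apply_symm_apply]
  exact ⟨OrderEmbedding.orderIso.trans
    ((OrderIso.setCongr _ _ hrange).trans OrderEmbedding.orderIso.symm)⟩
end

section
/- In Johnstone's dcpo X = ℕ × (ℕ ∪ {∞}), for each m ∈ ℕ the principal downset ↓(m,∞) is the supremum in Irr_σ(X) of the chain {↓(m,k) : k ∈ ℕ}, and each ↓(m,k) with k ∈ ℕ is a down-linear element of Irr_σ(X). -/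
/-- The carrier of Johnstone's dcpo: `ℕ × (ℕ ∪ {∞})`. -/
structure J where
  m : ℕ
  n : WithTop ℕ

/-- Johnstone's order: `(m,n) ≤ (m',n')` iff `m = m' ∧ n ≤ n'`, or `n' = ∞ ∧ n ≤ m'`. -/
instance : PartialOrder J where
  le p q := (p.m = q.m ∧ p.n ≤ q.n) ∨ (q.n = ⊤ ∧ p.n ≤ (q.m : WithTop ℕ))
  le_refl p := Or.inl ⟨rfl, le_refl _⟩
  le_trans p q r hpq hqr := by
    rcases hpq with ⟨h1, h2⟩ | ⟨h1, h2⟩ <;> rcases hqr with ⟨h3, h4⟩ | ⟨h3, h4⟩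
    · exact Or.inl ⟨h1.trans h3, h2.trans h4⟩
    · exact Or.inr ⟨h3, h2.trans h4⟩
    · exact Or.inr ⟨top_le_iff.mp (h1 ▸ h4), h3 ▸ h2⟩
    · exact absurd (h1 ▸ h4) (not_le.mpr (WithTop.coe_lt_top r.m))
  le_antisymm p q hpq hqp := by
    obtain ⟨pm, pn⟩ := p; obtain ⟨qm, qn⟩ := q
    rcases hpq with ⟨h1, h2⟩ | ⟨h1, h2⟩ <;> rcases hqp with ⟨h3, h4⟩ | ⟨h3, h4⟩
    · simp only [J.mk.injEq]
      exact ⟨h1, le_antisymm h2 h4⟩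
    · have hq : qn = ⊤ := top_le_iff.mp ((show pn = ⊤ from h3) ▸ h2)
      exact absurd (hq ▸ h4) (not_le.mpr (WithTop.coe_lt_top pm))
    · have hp : pn = ⊤ := top_le_iff.mp ((show qn = ⊤ from h1) ▸ h4)
      exact absurd (hp ▸ h2) (not_le.mpr (WithTop.coe_lt_top qm))
    · exact absurd ((show qn = ⊤ from h1) ▸ h4) (not_le.mpr (WithTop.coe_lt_top pm))

/-!
Below a point `(m,k)` with `k` finite, Johnstone's order is the chain `(m,0) ≤ ⋯ ≤ (m,k)`,
and two lower sets inside a chain are comparable. The points `(m,k)`, `k ∈ ℕ`,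
form a directed set whose supremum in `J` is `(m,∞)`: every `(m',∞)` with `m' ≠ m` lies above
only finitely many of them. Hence a Scott closed set containing all `↓(m,k)` contains
`(m,∞)`, and with it `↓(m,∞)`.
-/

section ScottClosed

variable {P : Type*} [PartialOrder P]

lemma scottClosed_Iic_s9 (a : P) : ScottClosed (Set.Iic a) :=
  ⟨isLowerSet_Iic a, fun _ hD _ _ _ hb => hb.2 hD⟩

lemma irrClosed_Iic_s9 (a : P) : IrrClosed (Set.Iic a) := by
  refine ⟨⟨a, le_rfl⟩, scottClosed_Iic_s9 a, fun F₁ F₂ h₁ h₂ hsub => ?_⟩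
  rcases hsub Set.self_mem_Iic with ha | ha
  · exact Or.inl (h₁.1.Iic_subset ha)
  · exact Or.inr (h₂.1.Iic_subset ha)

lemma ScottClosed.Iic_subset_of_isLUB_range {ι : Type*} [Nonempty ι] [Preorder ι]
    [IsDirectedOrder ι] {A : Set P} (hA : ScottClosed A) {f : ι → P} (hf : Monotone f)
    (hfA : ∀ i, f i ∈ A) {a : P} (ha : IsLUB (Set.range f) a) : Set.Iic a ⊆ A :=
  hA.1.Iic_subset <| hA.2 _ (Set.range_subset_iff.2 hfA) (Set.range_nonempty f)
    (directedOn_range.2 hf.directed_le) a ha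

lemma IsChain.subset_or_subset_of_isLowerSet {S B₁ B₂ : Set P} (hS : IsChain (· ≤ ·) S)
    (h₁ : IsLowerSet B₁) (h₂ : IsLowerSet B₂) (hB₁ : B₁ ⊆ S) (hB₂ : B₂ ⊆ S) :
    B₁ ⊆ B₂ ∨ B₂ ⊆ B₁ := by
  by_contra! h
  obtain ⟨⟨x, hx₁, hx₂⟩, ⟨y, hy₂, hy₁⟩⟩ := And.imp Set.not_subset.1 Set.not_subset.1 h
  rcases hS.total (hB₁ hx₁) (hB₂ hy₂) with hxy | hyx
  · exact hx₂ (h₂ hxy hy₂)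
  · exact hy₁ (h₁ hyx hx₁)

lemma DownLinear.isChain_irrClosed_subset_Iic {a : P} (ha : DownLinear a) :
    IsChain (· ⊆ ·) {B : Set P | IrrClosed B ∧ B ⊆ Set.Iic a} :=
  fun _ h₁ _ h₂ _ => IsChain.subset_or_subset_of_isLowerSet ha h₁.1.2.1.1 h₂.1.2.1.1 h₁.2 h₂.2

end ScottClosed

namespace J

lemma le_mk_coe_iff {p : J} {m k : ℕ} : p ≤ mk m k ↔ p.m = m ∧ p.n ≤ k :=
  or_iff_left fun h => WithTop.coe_ne_top h.1

lemma mk_le_mk_iff {m : ℕ} {a b : WithTop ℕ} : mk m a ≤ mk m b ↔ a ≤ b := by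
  refine ⟨fun h => ?_, fun h => Or.inl ⟨rfl, h⟩⟩
  rcases h with ⟨-, hab⟩ | ⟨hb, -⟩
  · exact hab
  · obtain rfl : b = ⊤ := hb
    exact le_top

lemma monotone_mk_coe (m : ℕ) : Monotone fun k : ℕ => mk m k :=
  fun _ _ h => mk_le_mk_iff.2 (WithTop.coe_mono h)

lemma downLinear_mk_coe (m k : ℕ) : DownLinear (mk m k) := by
  intro p hp q hq _
  have hpq : p.m = q.m := (le_mk_coe_iff.1 hp).1.trans (le_mk_coe_iff.1 hq).1.symm
  exact (le_total p.n q.n).imp (fun h => Or.inl ⟨hpq, h⟩) (fun h => Or.inl ⟨hpq.symm, h⟩)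

lemma isLUB_range_mk_coe (m : ℕ) : IsLUB (Set.range fun k : ℕ => mk m k) (mk m ⊤) := by
  refine ⟨?_, fun q hq => ?_⟩
  · rintro _ ⟨k, rfl⟩
    exact mk_le_mk_iff.2 le_top
  obtain ⟨qm, qn⟩ := q
  have hqn : qn = ⊤ := by
    induction qn with
    | top => rfl
    | coe j =>
      rcases hq ⟨j + 1, rfl⟩ with ⟨-, h⟩ | ⟨h, -⟩
      · exact absurd (WithTop.coe_le_coe.1 h) (Nat.not_succ_le_self j)
      · exact absurd h WithTop.coe_ne_top
  subst hqn
  rcases hq ⟨qm + 1, rfl⟩ with ⟨hm, -⟩ | ⟨-, h⟩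
  · exact Or.inl ⟨hm, le_top⟩
  · exact absurd (WithTop.coe_le_coe.1 h) (Nat.not_succ_le_self qm)

end J

/-- in Johnstone's dcpo, for each `m`, every `↓(m,k)` (`k ∈ ℕ`) is a
down-linear element of `Irr_σ(J)`, the family `{↓(m,k) : k ∈ ℕ}` is a chain, and
`↓(m,∞)` is its supremum in `Irr_σ(J)`. -/
theorem stmt9 (m : ℕ) :
    (∀ k : ℕ, IrrClosed (Set.Iic (J.mk m k))) ∧
    (∀ k : ℕ, IsChain (· ⊆ ·) {B : Set J | IrrClosed B ∧ B ⊆ Set.Iic (J.mk m k)}) ∧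
    IsChain (· ⊆ ·) {A : Set J | ∃ k : ℕ, A = Set.Iic (J.mk m k)} ∧
    IrrClosed (Set.Iic (J.mk m ⊤)) ∧
    (∀ k : ℕ, Set.Iic (J.mk m k) ⊆ Set.Iic (J.mk m ⊤)) ∧
    (∀ B : Set J, IrrClosed B → (∀ k : ℕ, Set.Iic (J.mk m k) ⊆ B) →
      Set.Iic (J.mk m ⊤) ⊆ B) := by
  refine ⟨fun k => irrClosed_Iic_s9 _,
    fun k => (J.downLinear_mk_coe m k).isChain_irrClosed_subset_Iic, ?_, irrClosed_Iic_s9 _,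
    fun k => Set.Iic_subset_Iic.2 (J.mk_le_mk_iff.2 le_top),
    fun B hB hall => hB.2.1.Iic_subset_of_isLUB_range (J.monotone_mk_coe m)
      (fun k => hall k Set.self_mem_Iic) (J.isLUB_range_mk_coe m)⟩
  refine (J.monotone_mk_coe m).Iic.isChain_range.mono ?_
  rintro _ ⟨k, rfl⟩
  exact ⟨k, rfl⟩
end

section
/- For every element x of a dcpo P, the principal downset ↓x is a C-compact element of the complete lattice C_σ(P) of Scott closed subsets of P. -/
/-- A Scott closed set `A` is a C-compact element of the complete lattice `C_σ(P)`:
for every nonempty Scott closed subset `S` of `C_σ(P)` with supremum `M`, `A ≤ M`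
implies `A ∈ S`. -/
def CCompactIn {P : Type*} [PartialOrder P] (A : Cσ P) : Prop :=
  ∀ S : Set (Cσ P), S.Nonempty → ScottClosed S → ∀ M, IsLUB S M → A ≤ M → A ∈ S

/-! The map `y ↦ ↓y` from `P` to `C_σ(P)` is Scott continuous, so `C = {y | ↓y ∈ S}` is Scott
closed. Since `S` is a lower set, every member `B` of `S` lies inside `C` (as `↓b ⊆ B` for `b ∈ B`),
hence so does `⋁S`; thus `x ∈ ↓x ⊆ ⋁S ⊆ C`, i.e. `↓x ∈ S`. -/

theorem scottClosed_Iic_s13 {P : Type*} [PartialOrder P] (y : P) : ScottClosed (Set.Iic y) :=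
  ⟨isLowerSet_Iic y, fun _ hD _ _ _ ha => ha.2 hD⟩

theorem ScottClosed.preimage {P Q : Type*} [PartialOrder P] [PartialOrder Q] {f : P → Q}
    (hf : ScottContinuous f) {S : Set Q} (hS : ScottClosed S) : ScottClosed (f ⁻¹' S) :=
  ⟨fun _ _ hba ha => hS.1 (hf.monotone hba) ha,
    fun D hD hne hdir a ha => hS.2 (f '' D) (Set.image_subset_iff.2 hD) (hne.image f)
      (hdir.mono_comp fun _ _ h => hf.monotone h) (f a) (hf hne hdir ha)⟩

namespace Cσ

variable {P : Type*} [PartialOrder P]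

def Iic (y : P) : Cσ P := ⟨Set.Iic y, scottClosed_Iic_s13 y⟩

theorem Iic_le_iff {y : P} {B : Cσ P} : Iic y ≤ B ↔ y ∈ (B : Set P) :=
  ⟨fun h => h (le_refl y), fun hy _ hz => B.2.1 hz hy⟩

theorem scottContinuous_Iic : ScottContinuous (Iic : P → Cσ P) := by
  intro D hne hdir a ha
  refine ⟨?_, fun B hB => Iic_le_iff.2 ?_⟩
  · rintro _ ⟨d, hd, rfl⟩
    exact Iic_le_iff.2 (ha.1 hd)
  · exact B.2.2 D (fun d hd => Iic_le_iff.1 (hB ⟨d, hd, rfl⟩)) hne hdir a ha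

theorem subset_preimage_Iic {S : Set (Cσ P)} (hS : IsLowerSet S) {B : Cσ P} (hB : B ∈ S) :
    (B : Set P) ⊆ Iic ⁻¹' S :=
  fun _ hb => hS (Iic_le_iff.2 hb) hB

end Cσ

theorem stmt13_general {P : Type*} [PartialOrder P]
    (x : P) (A : Cσ P) (hAx : (A : Set P) = Set.Iic x) : CCompactIn A := by
  intro S _ hS M hM hAM
  let C : Cσ P := ⟨Cσ.Iic ⁻¹' S, hS.preimage Cσ.scottContinuous_Iic⟩
  have hMC : M ≤ C := hM.2 fun _ hB => Cσ.subset_preimage_Iic hS.1 hB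
  have hxC : x ∈ (C : Set P) := hMC (hAM (hAx ▸ le_refl x))
  rwa [show A = Cσ.Iic x from Subtype.ext hAx]

/-- for every `x` in a dcpo `P`, the principal downset `↓x` is a
C-compact element of `C_σ(P)`. -/
theorem stmt13 {P : Type*} [PartialOrder P] (hP : Dcpo P)
    (x : P) (A : Cσ P) (hAx : (A : Set P) = Set.Iic x) : CCompactIn A :=
  stmt13_general x A hAx
end
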